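/- If κ is a regular uncountable cardinal and 2^κ = κ⁺, then there exists a sequence ⟨C_i : i < κ⁺⟩ of club subsets of κ that is almost decreasing (i.e., for all i < j < κ⁺ the set C_j \ C_i is bounded in κ) and generating (i.e., for every club D ⊆ κ there is i < κ⁺ such that C_i \ D is bounded in κ). -/

import Mathlib

/-! Enumerate the clubs of `κ` as `⟨D_i : i < κ⁺⟩`, which `2 ^ κ = κ⁺` allows, and choose by
recursion a club `C_i` almost contained in `D_i` and in every `C_j`, `j < i`. This is possible
because at most `κ` clubs always have a common almost-subclub: their diagonal intersection, which
is club since `κ` is regular and uncountable. -/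

/-- `C` is a club (closed unbounded) subset of the ordinal `κ`. -/
def IsClubOrd (κ : Ordinal) (C : Set Ordinal) : Prop :=
  C ⊆ Set.Iio κ ∧
  (∀ a < κ, ∃ b ∈ C, a ≤ b) ∧
  (∀ a < κ, (C ∩ Set.Iio a).Nonempty → sSup (C ∩ Set.Iio a) = a → a ∈ C)

/-- `S` is bounded below `κ`. -/
def BoundedIn (κ : Ordinal) (S : Set Ordinal) : Prop :=
  ∃ b < κ, ∀ x ∈ S, x < b

open Cardinal Function Order Set

universe u

theorem Set.exists_mapsTo_surjOn_of_mk_le {α β : Type u} {s : Set α} {t : Set β}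
    (ht : t.Nonempty) (h : #t ≤ #s) : ∃ f : α → β, MapsTo f s t ∧ SurjOn f s t := by
  have := ht.to_subtype
  obtain ⟨e⟩ := (le_def _ _).1 h
  classical
  refine ⟨fun a => if ha : a ∈ s then (invFun e ⟨a, ha⟩ : t) else ht.some,
    fun a ha => by simp [ha], fun b hb => ?_⟩
  obtain ⟨⟨a, ha⟩, hab⟩ := invFun_surjective e.injective ⟨b, hb⟩
  exact ⟨a, ha, by simp [ha, hab]⟩

theorem isClubOrd_Iio (κ : Ordinal) : IsClubOrd κ (Iio κ) :=
  ⟨subset_rfl, fun a ha => ⟨a, ha, le_rfl⟩, fun _ ha _ _ => ha⟩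

namespace IsClubOrd

variable {κ a c : Ordinal} {C : Set Ordinal}

theorem exists_gt (hC : IsClubOrd κ C) (hκ : IsSuccLimit κ) (hc : c < κ) : ∃ x ∈ C, c < x := by
  obtain ⟨x, hx, hcx⟩ := hC.2.1 (succ c) (hκ.succ_lt hc)
  exact ⟨x, hx, (lt_succ c).trans_le hcx⟩

theorem mem_of_forall_exists_mem_Ioo (hC : IsClubOrd κ C) (ha : a < κ) (ha₀ : a ≠ 0)
    (h : ∀ d < a, ∃ x ∈ C, x ∈ Ioo d a) : a ∈ C := by
  have hne : (C ∩ Iio a).Nonempty := by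
    obtain ⟨x, hx, -, hxa⟩ := h 0 (pos_iff_ne_zero.2 ha₀)
    exact ⟨x, hx, hxa⟩
  refine hC.2.2 a ha hne <|
    csSup_eq_of_forall_le_of_forall_lt_exists_gt hne (fun x hx => hx.2.le) fun d hd => ?_
  obtain ⟨x, hx, hdx, hxa⟩ := h d hd
  exact ⟨x, ⟨hx, hxa⟩, hdx⟩

end IsClubOrd

def diagInter (κ : Ordinal) (G : Ordinal → Set Ordinal) : Set Ordinal :=
  {α | α < κ ∧ ∀ ξ < α, α ∈ G ξ}

theorem diagInter_diff_subset_Iic (κ : Ordinal) (G : Ordinal → Set Ordinal) (ξ : Ordinal) :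
    diagInter κ G \ G ξ ⊆ Iic ξ :=
  fun _ hx => not_lt.1 fun hξ => hx.2 (hx.1.2 ξ hξ)

theorem mem_diagInter_of_csSup_eq {κ : Ordinal} {G : Ordinal → Set Ordinal}
    (hG : ∀ ξ < κ, IsClubOrd κ (G ξ)) {a : Ordinal} (ha : a < κ)
    (hne : (diagInter κ G ∩ Iio a).Nonempty) (hsup : sSup (diagInter κ G ∩ Iio a) = a) :
    a ∈ diagInter κ G := by
  refine ⟨ha, fun ξ hξ => (hG ξ (hξ.trans ha)).mem_of_forall_exists_mem_Ioo ha hξ.ne_bot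
    fun d hd => ?_⟩
  obtain ⟨x, ⟨hx, hxa⟩, hx'⟩ := exists_lt_of_lt_csSup hne (hsup ▸ max_lt hd hξ)
  exact ⟨x, hx.2 ξ ((le_max_right _ _).trans_lt hx'), (le_max_left _ _).trans_lt hx', hxa⟩

section Regular

variable {κ : Cardinal.{u}}

theorem Cardinal.IsRegular.iSup_Iio_add_one_lt_ord (hκ : κ.IsRegular) {c : Ordinal.{u}}
    (hc : c < κ.ord) {f : Iio c → Ordinal.{u}} (hf : ∀ ξ, f ξ < κ.ord) :
    ⨆ ξ, f ξ + 1 < κ.ord := by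
  refine Ordinal.lift_iSup_add_one_lt_of_lt_cof ?_ hf
  rw [← Ordinal.lift_cof, hκ.cof_ord, mk_Iio_ordinal, lift_lift, lift_lt]
  exact lt_ord.1 hc

theorem exists_mem_diagInter_ge (hκ : κ.IsRegular) (hκ₀ : ℵ₀ < κ)
    {G : Ordinal.{u} → Set Ordinal.{u}} (hG : ∀ ξ < κ.ord, IsClubOrd κ.ord (G ξ))
    {a : Ordinal.{u}} (ha : a < κ.ord) : ∃ b ∈ diagInter κ.ord G, a ≤ b := by
  have hlim : IsSuccLimit κ.ord := isSuccLimit_ord hκ.aleph0_le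
  have hnext : ∀ {ξ c}, ξ < c → c < κ.ord → sInf {x ∈ G ξ | c < x} ∈ {x ∈ G ξ | c < x} :=
    fun hξ hc => csInf_mem ((hG _ (hξ.trans hc)).exists_gt hlim hc)
  -- below any closure point `b` of `f` with `ξ < b`, the set `G ξ` is unbounded, so `b ∈ G ξ`
  let f : Ordinal.{u} → Ordinal.{u} := fun c => ⨆ ξ : Iio c, sInf {x ∈ G ξ | c < x} + 1
  have hf : ∀ c < κ.ord, f c < κ.ord := fun c hc =>
    hκ.iSup_Iio_add_one_lt_ord hc fun ξ => (hG ξ (ξ.2.trans hc)).1 (hnext ξ.2 hc).1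
  have hb : Ordinal.nfp f a < κ.ord := Cardinal.nfp_lt_ord_of_isRegular hκ hκ₀.ne' hf ha
  refine ⟨Ordinal.nfp f a, ⟨hb, fun ξ hξ => ?_⟩, Ordinal.le_nfp f a⟩
  refine (hG ξ (hξ.trans hb)).mem_of_forall_exists_mem_Ioo hb hξ.ne_bot fun d hd => ?_
  obtain ⟨n, hn⟩ := Ordinal.lt_nfp_iff.1 (max_lt hd hξ)
  have hc : f^[n] a < κ.ord := (Ordinal.iterate_le_nfp f a n).trans_lt hb
  obtain ⟨hx, hcx⟩ := hnext ((le_max_right _ _).trans_lt hn) hc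
  refine ⟨_, hx, (le_max_left _ _).trans_lt hn |>.trans hcx, ?_⟩
  calc sInf {x ∈ G ξ | f^[n] a < x}
      < sInf {x ∈ G ξ | f^[n] a < x} + 1 := Order.lt_add_one_iff.2 le_rfl
    _ ≤ f (f^[n] a) := Ordinal.le_iSup (fun η : Iio (f^[n] a) => _)
        ⟨ξ, (le_max_right _ _).trans_lt hn⟩
    _ = f^[n + 1] a := (iterate_succ_apply' f n a).symm
    _ ≤ Ordinal.nfp f a := Ordinal.iterate_le_nfp f a (n + 1)

theorem isClubOrd_diagInter (hκ : κ.IsRegular) (hκ₀ : ℵ₀ < κ)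
    {G : Ordinal.{u} → Set Ordinal.{u}} (hG : ∀ ξ < κ.ord, IsClubOrd κ.ord (G ξ)) :
    IsClubOrd κ.ord (diagInter κ.ord G) :=
  ⟨fun _ hx => hx.1, fun _ ha => exists_mem_diagInter_ge hκ hκ₀ hG ha,
    fun _ ha => mem_diagInter_of_csSup_eq hG ha⟩

theorem exists_isClubOrd_forall_boundedIn_diff (hκ : κ.IsRegular) (hκ₀ : ℵ₀ < κ)
    {S : Set (Set Ordinal.{u})} (hS : #S ≤ lift.{u + 1} κ)
    (hSc : ∀ C ∈ S, IsClubOrd κ.ord C) :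
    ∃ E, IsClubOrd κ.ord E ∧ ∀ C ∈ S, BoundedIn κ.ord (E \ C) := by
  rcases S.eq_empty_or_nonempty with rfl | hne
  · exact ⟨Iio κ.ord, isClubOrd_Iio _, by simp⟩
  obtain ⟨G, hGS, hGsurj⟩ := exists_mapsTo_surjOn_of_mk_le (s := Iio κ.ord) hne
    (by rwa [mk_Iio_ordinal, card_ord])
  refine ⟨diagInter κ.ord G, isClubOrd_diagInter hκ hκ₀ fun ξ hξ => hSc _ (hGS hξ),
    fun C hC => ?_⟩
  obtain ⟨ξ, hξ, rfl⟩ := hGsurj hC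
  exact ⟨succ ξ, (isSuccLimit_ord hκ.aleph0_le).succ_lt hξ,
    fun x hx => lt_succ_iff.2 (diagInter_diff_subset_Iic _ _ _ hx)⟩

theorem mk_insert_range_Iio_le (hκ : ℵ₀ ≤ κ) {i : Ordinal.{u}} (hi : i < (succ κ).ord)
    (X : Set Ordinal.{u}) (F : Iio i → Set Ordinal.{u}) :
    #(insert X (range F) : Set (Set Ordinal.{u})) ≤ lift.{u + 1} κ :=
  calc #(insert X (range F) : Set (Set Ordinal.{u}))
      ≤ #(range F) + 1 := mk_insert_le
    _ ≤ #(Iio i) + 1 := add_le_add_left mk_range_le 1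
    _ = lift.{u + 1} i.card + 1 := by rw [mk_Iio_ordinal]
    _ ≤ lift.{u + 1} κ + 1 := add_le_add_left (lift_le.2 (lt_succ_iff.1 (lt_ord.1 hi))) 1
    _ = lift.{u + 1} κ := add_one_eq (aleph0_le_lift.2 hκ)

end Regular

noncomputable def clubPseudoIntersection (κ : Ordinal) (S : Set (Set Ordinal)) : Set Ordinal :=
  Classical.epsilon fun E => IsClubOrd κ E ∧ ∀ C ∈ S, BoundedIn κ (E \ C)

noncomputable def clubTower (κ : Ordinal.{u}) (D : Ordinal.{u} → Set Ordinal.{u}) :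
    Ordinal.{u} → Set Ordinal.{u} :=
  wellFounded_lt.fix fun i C =>
    clubPseudoIntersection κ (insert (D i) (range fun j : Iio i => C j j.2))

theorem clubTower_eq (κ : Ordinal.{u}) (D : Ordinal.{u} → Set Ordinal.{u}) (i : Ordinal.{u}) :
    clubTower κ D i =
      clubPseudoIntersection κ (insert (D i) (range fun j : Iio i => clubTower κ D j)) :=
  wellFounded_lt.fix_eq _ i

section Tower

variable {κ : Cardinal.{u}}

theorem clubPseudoIntersection_spec (hκ : κ.IsRegular) (hκ₀ : ℵ₀ < κ)
    {S : Set (Set Ordinal.{u})} (hS : #S ≤ lift.{u + 1} κ) (hSc : ∀ C ∈ S, IsClubOrd κ.ord C) :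
    IsClubOrd κ.ord (clubPseudoIntersection κ.ord S) ∧
      ∀ C ∈ S, BoundedIn κ.ord (clubPseudoIntersection κ.ord S \ C) :=
  Classical.epsilon_spec (exists_isClubOrd_forall_boundedIn_diff hκ hκ₀ hS hSc)

theorem clubTower_spec (hκ : κ.IsRegular) (hκ₀ : ℵ₀ < κ) {D : Ordinal.{u} → Set Ordinal.{u}}
    (hD : ∀ j < (succ κ).ord, IsClubOrd κ.ord (D j)) {i : Ordinal.{u}} (hi : i < (succ κ).ord) :
    IsClubOrd κ.ord (clubTower κ.ord D i) ∧ BoundedIn κ.ord (clubTower κ.ord D i \ D i) ∧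
      ∀ j < i, BoundedIn κ.ord (clubTower κ.ord D i \ clubTower κ.ord D j) := by
  induction i using WellFoundedLT.induction with
  | _ i IH =>
    rw [clubTower_eq]
    obtain ⟨hclub, hbdd⟩ := clubPseudoIntersection_spec hκ hκ₀
      (mk_insert_range_Iio_le hκ.aleph0_le hi _ _) (by
        rintro C (rfl | ⟨j, rfl⟩)
        · exact hD i hi
        · exact (IH j j.2 (j.2.trans hi)).1)
    exact ⟨hclub, hbdd _ (mem_insert _ _), fun j hj => hbdd _ (mem_insert_of_mem _ ⟨⟨j, hj⟩, rfl⟩)⟩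

theorem exists_mapsTo_surjOn_clubs (hpow : (2 : Cardinal) ^ κ = succ κ) :
    ∃ D : Ordinal.{u} → Set Ordinal.{u}, MapsTo D (Iio (succ κ).ord) {E | IsClubOrd κ.ord E} ∧
      SurjOn D (Iio (succ κ).ord) {E | IsClubOrd κ.ord E} := by
  refine exists_mapsTo_surjOn_of_mk_le ⟨_, isClubOrd_Iio _⟩ ?_
  calc #{E | IsClubOrd κ.ord E} ≤ #(𝒫 Iio κ.ord) := mk_le_mk_of_subset fun E hE => hE.1
    _ = #(Iio (succ κ).ord) := by
      rw [mk_powerset, mk_Iio_ordinal, mk_Iio_ordinal, card_ord, card_ord, ← hpow, lift_power,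
        lift_two]

end Tower

theorem stmt0 (κ : Cardinal) (hreg : κ.IsRegular) (hunc : Cardinal.aleph0 < κ)
    (hpow : (2 : Cardinal) ^ κ = Order.succ κ) :
    ∃ C : Ordinal → Set Ordinal,
      (∀ i < (Order.succ κ).ord, IsClubOrd κ.ord (C i)) ∧
      (∀ i j, i < j → j < (Order.succ κ).ord → BoundedIn κ.ord (C j \ C i)) ∧
      (∀ D : Set Ordinal, IsClubOrd κ.ord D →
        ∃ i < (Order.succ κ).ord, BoundedIn κ.ord (C i \ D)) := by
  obtain ⟨D, hD, hDsurj⟩ := exists_mapsTo_surjOn_clubs hpow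
  have hC := fun i (hi : i < (succ κ).ord) => clubTower_spec hreg hunc hD hi
  refine ⟨clubTower κ.ord D, fun i hi => (hC i hi).1, fun i j hij hj => (hC j hj).2.2 i hij,
    fun E hE => ?_⟩
  obtain ⟨i, hi, rfl⟩ := hDsurj hE
  exact ⟨i, hi, (hC i hi).2.1⟩
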